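/- For the cubic threefold X ⊂ P^4 defined by F = x_0 x_1 x_2 + x_0^2 x_4 + x_1^2 x_3, the closure of a general fiber of the Gauss map is a line, and the locus of intersection points of these lines with Sing(X) is the conic {x_2^2 − 4 x_3 x_4 = 0} inside the plane Sing(X) = {x_0 = x_1 = 0}. -/

import Mathlib

open MvPolynomial

noncomputable section

variable {σ : Type*}

/-- The common zero locus of a set of polynomials. -/
def zLocus (I : Set (MvPolynomial σ ℂ)) : Set (σ → ℂ) :=
  {x | ∀ f ∈ I, eval x f = 0}

/-- A set is algebraic if it is a common zero locus of polynomials. -/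
def IsAlg (S : Set (σ → ℂ)) : Prop :=
  ∃ I : Set (MvPolynomial σ ℂ), S = zLocus I

/-- Zariski closure. -/
def zcl (S : Set (σ → ℂ)) : Set (σ → ℂ) :=
  ⋂₀ {T | IsAlg T ∧ S ⊆ T}

/-- Irreducibility of a set with respect to algebraic subsets. -/
def IsIrredV (S : Set (σ → ℂ)) : Prop :=
  S.Nonempty ∧ ∀ T₁ T₂ : Set (σ → ℂ), IsAlg T₁ → IsAlg T₂ →
    S ⊆ T₁ ∪ T₂ → S ⊆ T₁ ∨ S ⊆ T₂

/-- Dimension of (the affine cone over) a variety, via chains of irreducible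
algebraic subsets. For the cone over a projective variety this is
(projective dimension) + 1. -/
def adim (S : Set (σ → ℂ)) : WithBot (WithTop ℕ) :=
  Order.krullDim {T : Set (σ → ℂ) // IsAlg T ∧ IsIrredV T ∧ T ⊆ S}

/-- `S` is (the affine cone over) a projective cone: there is a vertex `v`
such that the line through `v` and any point of `S` stays in `S`. -/
def IsConeV (S : Set (σ → ℂ)) : Prop :=
  ∃ v ∈ S, v ≠ 0 ∧ ∀ x ∈ S, ∀ a b : ℂ, a • v + b • x ∈ S

/-- Secant variety (of cones): closure of the union of lines through pairs of points. -/
def secantV (S : Set (σ → ℂ)) : Set (σ → ℂ) :=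
  zcl {v | ∃ x ∈ S, ∃ y ∈ S, ∃ a b : ℂ, v = a • x + b • y}

/-- The gradient of a polynomial at a point. -/
def gradP [Fintype σ] [DecidableEq σ] (P : MvPolynomial σ ℂ) (v : σ → ℂ) : σ → ℂ :=
  fun i => eval v (pderiv i P)

/-- The singular locus (cone) of the hypersurface defined by `P`. -/
def singLocus [Fintype σ] [DecidableEq σ] (P : MvPolynomial σ ℂ) : Set (σ → ℂ) :=
  {v | ∀ i, eval v (pderiv i P) = 0}

end

/-- The Perazzo cubic threefold `x₀x₁x₂ + x₀²x₄ + x₁²x₃` in `ℙ⁴`. -/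
noncomputable def perazzoCubic : MvPolynomial (Fin 5) ℂ :=
  MvPolynomial.X 0 * MvPolynomial.X 1 * MvPolynomial.X 2
    + MvPolynomial.X 0 ^ 2 * MvPolynomial.X 4 + MvPolynomial.X 1 ^ 2 * MvPolynomial.X 3

/-- The line `[t:u] ↦ [t : at : −bt−2au : u : abt+a²u]` (as a cone in `ℂ⁵`). -/
def perazzoLine (a b t u : ℂ) : Fin 5 → ℂ :=
  ![t, a * t, -(b * t) - 2 * (a * u), u, a * b * t + a ^ 2 * u]

/-!
The gradient of `F` is `(x₁x₂ + 2x₀x₄, x₀x₂ + 2x₁x₃, x₀x₁, x₁², x₀²)`. If it equals `c • w` with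
`w = (ab, -b, a, a², 1)` and `c ≠ 0`, then `x₀² = c ≠ 0`, and dividing by `x₀` turns the remaining
equations into the linear ones defining the line `[t : at : -bt-2au : u : abt+a²u]`; conversely the
gradient along that line is `t² • w`. So the Gauss fiber is the line minus its point `t = 0`, and
its Zariski closure is the whole line, because a polynomial vanishing on a punctured line vanishes
on the line. The same `t² • w` shows that the line meets `Sing(X)` exactly at `t = 0`. These points
`(0, 0, -2a, 1, a²)` sweep out the conic `x₂² = 4x₃x₄` minus its point `[0:0:0:0:1]`, which is the
limit `a → ∞`.
-/

section ZariskiClosure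

variable {σ : Type*}

lemma subset_zcl (S : Set (σ → ℂ)) : S ⊆ zcl S :=
  fun _ hx => Set.mem_sInter.2 fun _ hT => hT.2 hx

lemma zcl_subset {S T : Set (σ → ℂ)} (hT : IsAlg T) (hST : S ⊆ T) : zcl S ⊆ T :=
  Set.sInter_subset_of_mem ⟨hT, hST⟩

lemma zcl_eq_of_isAlg {S T : Set (σ → ℂ)} (hT : IsAlg T) (hST : S ⊆ T) (hTS : T ⊆ zcl S) :
    zcl S = T :=
  (zcl_subset hT hST).antisymm hTS

lemma isAlg_empty : IsAlg (∅ : Set (σ → ℂ)) :=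
  ⟨{1}, by ext; simp [zLocus]⟩

lemma isAlg_submodule [Fintype σ] (W : Submodule ℂ (σ → ℂ)) : IsAlg (W : Set (σ → ℂ)) := by
  classical
  refine ⟨Set.range fun φ : W.dualAnnihilator =>
    ∑ i, C ((φ : Module.Dual ℂ (σ → ℂ)) fun j => if i = j then 1 else 0) * X i, ?_⟩
  ext v
  conv_lhs => rw [SetLike.mem_coe, ← Subspace.dualAnnihilator_dualCoannihilator_eq (W := W)]
  simp only [Submodule.mem_dualCoannihilator, zLocus, Set.forall_mem_range, Set.mem_ofPred_eq,
    map_sum, map_mul, eval_C, eval_X, Subtype.forall, LinearMap.pi_apply_eq_sum_univ _ v,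
    smul_eq_mul, mul_comm]

lemma polynomial_curve_mem_zcl {S : Set (σ → ℂ)} (g : σ → Polynomial ℂ)
    (hS : ∀ s ≠ 0, (fun i => (g i).eval s) ∈ S) (s : ℂ) : (fun i => (g i).eval s) ∈ zcl S := by
  have eval_aeval : ∀ (f : MvPolynomial σ ℂ) (s : ℂ),
      (aeval g f).eval s = eval (fun i => (g i).eval s) f := fun f s => by
    simp only [← Polynomial.coe_aeval_eq_eval, comp_aeval_apply]
    rfl
  rintro T ⟨⟨I, rfl⟩, hST⟩ f hf
  suffices aeval g f = 0 by rw [← eval_aeval, this, Polynomial.eval_zero]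
  refine Polynomial.eq_zero_of_infinite_isRoot _ ((Set.finite_singleton 0).infinite_compl.mono ?_)
  intro r hr
  exact (eval_aeval f r).trans (hST (hS r hr) f hf)

lemma affine_line_mem_zcl {S : Set (σ → ℂ)} (p q : σ → ℂ) (hS : ∀ s : ℂ, s ≠ 0 → s • p + q ∈ S)
    (s : ℂ) : s • p + q ∈ zcl S := by
  have hg : ∀ r : ℂ,
      (fun i => (Polynomial.C (p i) * Polynomial.X + Polynomial.C (q i)).eval r) = r • p + q :=
    fun r => by ext i; simp [mul_comm r]
  rw [← hg]
  exact polynomial_curve_mem_zcl _ (fun r hr => hg r ▸ hS r hr) s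

end ZariskiClosure

section GaussMap

variable {σ : Type*} [Fintype σ] [DecidableEq σ]

def gaussFiber (P : MvPolynomial σ ℂ) (w : σ → ℂ) : Set (σ → ℂ) :=
  {v | eval v P = 0 ∧ ∃ c : ℂ, c ≠ 0 ∧ gradP P v = c • w}

lemma mem_singLocus_iff_gradP_eq_zero {P : MvPolynomial σ ℂ} {v : σ → ℂ} :
    v ∈ singLocus P ↔ gradP P v = 0 :=
  funext_iff.symm

end GaussMap

lemma gradP_perazzoCubic (v : Fin 5 → ℂ) : gradP perazzoCubic v =
    ![v 1 * v 2 + 2 * (v 0 * v 4), v 0 * v 2 + 2 * (v 1 * v 3), v 0 * v 1, v 1 ^ 2, v 0 ^ 2] := by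
  funext i
  fin_cases i <;> simp [gradP, perazzoCubic] <;> ring

lemma eval_perazzoLine (a b t u : ℂ) : eval (perazzoLine a b t u) perazzoCubic = 0 := by
  simp only [perazzoCubic, perazzoLine, map_add, map_mul, map_pow, eval_X, Matrix.cons_val]
  ring

lemma gradP_perazzoLine (a b t u : ℂ) : gradP perazzoCubic (perazzoLine a b t u)
    = (t ^ 2) • (![a * b, -b, a, a ^ 2, 1] : Fin 5 → ℂ) := by
  rw [gradP_perazzoCubic]
  funext i
  fin_cases i <;> simp [perazzoLine] <;> ring

lemma perazzoLine_eq_add (a b t u : ℂ) :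
    perazzoLine a b t u = t • perazzoLine a b 1 0 + u • perazzoLine a b 0 1 := by
  funext i
  fin_cases i <;> simp [perazzoLine] <;> ring

lemma mem_span_perazzoLine_iff {a b : ℂ} {v : Fin 5 → ℂ} :
    v ∈ Submodule.span ℂ {perazzoLine a b 1 0, perazzoLine a b 0 1} ↔
      ∃ t u, v = perazzoLine a b t u := by
  simp only [Submodule.mem_span_pair, ← perazzoLine_eq_add, eq_comm]

lemma eq_perazzoLine_of_gradP_eq_smul {a b c : ℂ} {v : Fin 5 → ℂ} (hc : c ≠ 0)
    (hv : gradP perazzoCubic v = c • ![a * b, -b, a, a ^ 2, 1]) :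
    v = perazzoLine a b (v 0) (v 3) := by
  rw [gradP_perazzoCubic] at hv
  have h0 := congrFun hv 0
  have h1 := congrFun hv 1
  have h2 := congrFun hv 2
  have h4 := congrFun hv 4
  simp only [Matrix.cons_val, Pi.smul_apply, smul_eq_mul, mul_one] at h0 h1 h2 h4
  have hv0 : v 0 ≠ 0 := fun h => hc (by rw [← h4, h, sq, zero_mul])
  have e1 : v 1 = a * v 0 := mul_left_cancel₀ hv0 (by linear_combination h2 - a * h4)
  have e2 : v 2 = -(b * v 0) - 2 * (a * v 3) :=
    mul_left_cancel₀ hv0 (by linear_combination h1 + b * h4 - 2 * v 3 * e1)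
  have e4 : v 4 = a * b * v 0 + a ^ 2 * v 3 :=
    mul_left_cancel₀ hv0 (by linear_combination (h0 - v 2 * e1 - a * v 0 * e2 - a * b * h4) / 2)
  funext i
  fin_cases i <;> simp [perazzoLine, e1, e2, e4]

lemma zcl_gaussFiber_perazzoCubic (a b : ℂ) :
    zcl (gaussFiber perazzoCubic ![a * b, -b, a, a ^ 2, 1]) =
      ↑(Submodule.span ℂ {perazzoLine a b 1 0, perazzoLine a b 0 1}) := by
  refine zcl_eq_of_isAlg (isAlg_submodule _) ?_ ?_
  · rintro v ⟨-, c, hc, hv⟩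
    exact mem_span_perazzoLine_iff.2 ⟨_, _, eq_perazzoLine_of_gradP_eq_smul hc hv⟩
  · intro v hv
    obtain ⟨t, u, rfl⟩ := mem_span_perazzoLine_iff.1 hv
    rw [perazzoLine_eq_add]
    refine affine_line_mem_zcl _ _ (fun s hs => ?_) t
    rw [← perazzoLine_eq_add]
    exact ⟨eval_perazzoLine a b s u, s ^ 2, pow_ne_zero 2 hs, gradP_perazzoLine a b s u⟩

lemma perazzoLine_mem_singLocus_iff (a b t u : ℂ) :
    perazzoLine a b t u ∈ singLocus perazzoCubic ↔
      ∃ c : ℂ, perazzoLine a b t u = c • ![0, 0, -(2 * a), 1, a ^ 2] := by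
  have hgrad : perazzoLine a b t u ∈ singLocus perazzoCubic ↔ t = 0 := by
    rw [mem_singLocus_iff_gradP_eq_zero, gradP_perazzoLine, smul_eq_zero,
      pow_eq_zero_iff two_ne_zero, or_iff_left]
    exact fun h => one_ne_zero (congrFun h 4)
  rw [hgrad]
  constructor
  · rintro rfl
    exact ⟨u, by funext i; fin_cases i <;> simp [perazzoLine] <;> ring⟩
  · rintro ⟨c, hc⟩
    simpa [perazzoLine] using congrFun hc 0

lemma isAlg_perazzoConic :
    IsAlg {v : Fin 5 → ℂ | v 0 = 0 ∧ v 1 = 0 ∧ v 2 ^ 2 = 4 * (v 3 * v 4)} := by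
  refine ⟨{X 0, X 1, X 2 ^ 2 - C 4 * (X 3 * X 4)}, ?_⟩
  ext v
  simp only [zLocus, Set.mem_insert_iff, Set.mem_singleton_iff, Set.mem_ofPred_eq,
    forall_eq_or_imp, forall_eq, map_sub, map_mul, map_pow, eval_C, eval_X, sub_eq_zero]

/-- The point `[0:0:0:0:1]` is the value at `s = 0` of the curve `s ↦ (0, 0, -2s, s², 1)`,
which is `s² • (0, 0, -2/s, 1, 1/s²)` for `s ≠ 0`. -/
lemma perazzoConic_subset_zcl :
    {v : Fin 5 → ℂ | v 0 = 0 ∧ v 1 = 0 ∧ v 2 ^ 2 = 4 * (v 3 * v 4)} ⊆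
      zcl {v | ∃ a u : ℂ, v = u • ![0, 0, -(2 * a), 1, a ^ 2]} := by
  rintro v ⟨h0, h1, h2⟩
  by_cases h3 : v 3 = 0
  · have hv2 : v 2 = 0 := pow_eq_zero_iff two_ne_zero |>.1 (by rw [h2, h3, zero_mul, mul_zero])
    let g : Fin 5 → Polynomial ℂ := ![0, 0, Polynomial.C (-2 * v 4) * Polynomial.X,
      Polynomial.C (v 4) * Polynomial.X ^ 2, Polynomial.C (v 4)]
    have hv : v = fun i => (g i).eval 0 := by
      funext i; fin_cases i <;> simp [g, h0, h1, hv2, h3]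
    rw [hv]
    refine polynomial_curve_mem_zcl g (fun s hs => ?_) 0
    refine ⟨s⁻¹, v 4 * s ^ 2, ?_⟩
    funext i; fin_cases i <;> simp [g] <;> field_simp
  · apply subset_zcl
    refine ⟨-v 2 / (2 * v 3), v 3, ?_⟩
    funext i; fin_cases i <;> simp [h0, h1] <;> field_simp
    linear_combination -h2

/-- the closure of a general fiber of the Gauss map of the Perazzo
cubic is the line `[t:u] ↦ [t : at : −bt−2au : u : abt+a²u]` (for general `(a,b)`
it is exactly the fiber over the tangent hyperplane with coordinates
`(ab, −b, a, a², 1)`, and it meets the singular plane exactly in the point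
`[0:0:−2a:1:a²]`); the locus of these intersection points is the conic
`{x₂² = 4x₃x₄}` inside the plane `Sing(X) = {x₀ = x₁ = 0}`. -/
theorem stmt6 :
    -- each such line lies on the cubic
    (∀ a b t u : ℂ, MvPolynomial.eval (perazzoLine a b t u) perazzoCubic = 0) ∧
    -- the Gauss map contracts each such line: the gradient along the line is
    -- proportional to the fixed covector `(ab, −b, a, a², 1)`
    (∀ a b t u : ℂ, gradP perazzoCubic (perazzoLine a b t u)
        = (t ^ 2) • (![a * b, -b, a, a ^ 2, 1] : Fin 5 → ℂ)) ∧
    -- for general `(a,b)`, the closure of the Gauss fiber is exactly that line,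
    -- and it meets the singular locus exactly in the ray of `[0:0:−2a:1:a²]`
    (∃ B : Set (Fin 2 → ℂ), IsAlg B ∧ B ≠ Set.univ ∧
      ∀ ab : Fin 2 → ℂ, ab ∉ B →
        zcl {v : Fin 5 → ℂ | MvPolynomial.eval v perazzoCubic = 0 ∧
            ∃ c : ℂ, c ≠ 0 ∧ gradP perazzoCubic v
              = c • (![ab 0 * ab 1, -(ab 1), ab 0, (ab 0) ^ 2, 1] : Fin 5 → ℂ)}
          = ↑(Submodule.span ℂ {perazzoLine (ab 0) (ab 1) 1 0,
              perazzoLine (ab 0) (ab 1) 0 1}) ∧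
        ∀ v ∈ Submodule.span ℂ {perazzoLine (ab 0) (ab 1) 1 0,
            perazzoLine (ab 0) (ab 1) 0 1},
          ((∀ i, MvPolynomial.eval v (MvPolynomial.pderiv i perazzoCubic) = 0) ↔
            ∃ c : ℂ, v = c • (![0, 0, -(2 * ab 0), 1, (ab 0) ^ 2] : Fin 5 → ℂ))) ∧
    -- the locus of all these intersection points is the conic `x₂² = 4x₃x₄`
    -- in the plane `{x₀ = x₁ = 0}`
    zcl {v : Fin 5 → ℂ | ∃ a u : ℂ,
        v = u • (![0, 0, -(2 * a), 1, a ^ 2] : Fin 5 → ℂ)}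
      = {v : Fin 5 → ℂ | v 0 = 0 ∧ v 1 = 0 ∧ (v 2) ^ 2 = 4 * (v 3 * v 4)} := by
  refine ⟨eval_perazzoLine, gradP_perazzoLine,
    ⟨∅, isAlg_empty, Set.empty_ne_univ, fun ab _ => ⟨zcl_gaussFiber_perazzoCubic _ _, ?_⟩⟩,
    zcl_eq_of_isAlg isAlg_perazzoConic ?_ perazzoConic_subset_zcl⟩
  · intro v hv
    obtain ⟨t, u, rfl⟩ := mem_span_perazzoLine_iff.1 hv
    exact perazzoLine_mem_singLocus_iff _ _ t u
  · rintro v ⟨a, u, rfl⟩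
    refine ⟨by simp, by simp, ?_⟩
    simp only [Pi.smul_apply, Matrix.cons_val, smul_eq_mul]
    ring
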